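/- arXiv:2101.00975 — 9 statements merged into one kernel-verified Lean document; each statement's English description precedes it below -/
import Mathlib

section
/- Let n and x be positive integers with 4x > n, and suppose 4x - n = y₁ + z₁ where y₁ and z₁ are positive integers each dividing n·x. Then there exist positive integers y, z with 4/n = 1/x + 1/y + 1/z. -/
/-! If `4x - n = y₁ + z₁` then `4/n = (n + y₁ + z₁)/(nx) = 1/x + y₁/(nx) + z₁/(nx)`, and
`y₁/(nx) = 1/(nx/y₁)` is a unit fraction whenever `y₁ ∣ nx`. -/

lemma Nat.one_div_cast_div_eq {m d : ℕ} (hm : m ≠ 0) (hd : d ∣ m) :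
    (1 : ℚ) / (m / d : ℕ) = d / m := by
  have hd0 : (d : ℚ) ≠ 0 := by
    exact_mod_cast (Nat.pos_of_dvd_of_pos hd (Nat.pos_of_ne_zero hm)).ne'
  rw [Nat.cast_div hd hd0, one_div_div]

lemma four_div_eq_add_div_mul {n x y₁ z₁ : ℚ} (hn : n ≠ 0) (hx : x ≠ 0)
    (hsum : y₁ + z₁ + n = 4 * x) :
    4 / n = 1 / x + y₁ / (n * x) + z₁ / (n * x) := by
  field_simp
  linear_combination -hsum

theorem stmt_4_general (n x y₁ z₁ : ℕ) (hn : 0 < n) (hx : 0 < x)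
    (hsum : 4 * x - n = y₁ + z₁)
    (hdy : y₁ ∣ n * x) (hdz : z₁ ∣ n * x) :
    ∃ y z : ℕ, 0 < y ∧ 0 < z ∧ (4 : ℚ) / n = 1 / x + 1 / y + 1 / z := by
  have hnx : 0 < n * x := Nat.mul_pos hn hx
  have hy₁ : 0 < y₁ := Nat.pos_of_dvd_of_pos hdy hnx
  have hz₁ : 0 < z₁ := Nat.pos_of_dvd_of_pos hdz hnx
  refine ⟨n * x / y₁, n * x / z₁, Nat.div_pos (Nat.le_of_dvd hnx hdy) hy₁,
    Nat.div_pos (Nat.le_of_dvd hnx hdz) hz₁, ?_⟩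
  have hsum' : y₁ + z₁ + n = 4 * x := by omega
  rw [Nat.one_div_cast_div_eq hnx.ne' hdy, Nat.one_div_cast_div_eq hnx.ne' hdz, Nat.cast_mul]
  exact four_div_eq_add_div_mul (by positivity) (by positivity) (by exact_mod_cast hsum')

theorem stmt_4 (n x y₁ z₁ : ℕ) (hn : 0 < n) (hx : 0 < x)
    (hy₁ : 0 < y₁) (hz₁ : 0 < z₁)
    (hgt : n < 4 * x) (hsum : 4 * x - n = y₁ + z₁)
    (hdy : y₁ ∣ n * x) (hdz : z₁ ∣ n * x) :
    ∃ y z : ℕ, 0 < y ∧ 0 < z ∧ (4 : ℚ) / n = 1 / x + 1 / y + 1 / z :=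
  stmt_4_general n x y₁ z₁ hn hx hsum hdy hdz
end

section
/- For every natural number l ≥ 1, 4/(24l-7) = 1/(6l-1) + 1/(2l(6l-1)(24l-7)) + 1/(2l(24l-7)); hence the Erdős–Straus equation has a solution for all n ≡ 17 (mod 24). -/
theorem four_div_eq_one_div_add_one_div_add_one_div {K : Type*} [Field K] {l : K}
    (h2 : (2 : K) ≠ 0) (hl : l ≠ 0) (h6 : 6 * l - 1 ≠ 0) (h24 : 24 * l - 7 ≠ 0) :
    4 / (24 * l - 7) =
      1 / (6 * l - 1) + 1 / (2 * l * (6 * l - 1) * (24 * l - 7))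
        + 1 / (2 * l * (24 * l - 7)) := by
  rw [div_add_div _ _ h6 (by simp [*]), div_add_div _ _ (by simp [*]) (by simp [*]),
    div_eq_div_iff h24 (by simp [*])]
  ring

theorem exists_erdosStraus_of_mod_24_eq_17 {n : ℕ} (hn : n % 24 = 17) :
    ∃ x y z : ℕ, 0 < x ∧ 0 < y ∧ 0 < z ∧ (4 : ℚ) / n = 1 / x + 1 / y + 1 / z := by
  obtain ⟨k, rfl⟩ : ∃ k, n = 24 * k + 17 := ⟨n / 24, by omega⟩
  -- `l = k + 1`: then `6 l - 1 = 6 k + 5` and `24 l - 7 = 24 k + 17`, with no `ℕ` subtraction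
  refine ⟨6 * k + 5, 2 * (k + 1) * (6 * k + 5) * (24 * k + 17), 2 * (k + 1) * (24 * k + 17),
    by positivity, by positivity, by positivity, ?_⟩
  have hk : (0 : ℚ) ≤ k := k.cast_nonneg
  have h := four_div_eq_one_div_add_one_div_add_one_div (l := ((k + 1 : ℕ) : ℚ)) two_ne_zero
    (by positivity) (by push_cast; linarith) (by push_cast; linarith)
  push_cast at h ⊢
  convert h using 3 <;> ring

theorem stmt_7 (l : ℕ) (hl : 1 ≤ l) :
    (4 : ℚ) / (24 * l - 7) =
      1 / (6 * l - 1) + 1 / (2 * l * (6 * l - 1) * (24 * l - 7))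
        + 1 / (2 * l * (24 * l - 7)) ∧
    ∀ n : ℕ, 0 < n → n % 24 = 17 →
      ∃ x y z : ℕ, 0 < x ∧ 0 < y ∧ 0 < z ∧
        (4 : ℚ) / n = 1 / x + 1 / y + 1 / z := by
  have hl' : (1 : ℚ) ≤ l := by exact_mod_cast hl
  exact ⟨four_div_eq_one_div_add_one_div_add_one_div two_ne_zero (by positivity)
      (by linarith) (by linarith),
    fun _ _ hn => exists_erdosStraus_of_mod_24_eq_17 hn⟩
end

section
/- Let l, b be positive integers and suppose 3b+2 divides (6l+1)(24l+1), say (6l+1)(24l+1) = f·(3b+2). Then 4/(24l+1) = 1/(6l+1) + 1/((3b+2)(b+1)f) + 1/((b+1)f); in particular the Erdős–Straus equation has a solution for n = 24l+1 whenever 6l+1 or 24l+1 has a divisor congruent to 2 mod 3 of the form 3b+2 with b ≥ 1. -/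
/-!
Since `24l + 1 = 4(6l + 1) - 3`, we have `4/(24l+1) = 1/(6l+1) + 3/((6l+1)(24l+1))`, and the
factorisation `(6l+1)(24l+1) = f(3b+2)` turns the last term into `3/(f(3b+2))`, which splits as
`1/((3b+2)(b+1)f) + 1/((b+1)f)` because `1 + (3b+2) = 3(b+1)`.
-/

section

variable {K : Type*} [Field K]

theorem four_div_four_mul_sub_three {m : K} (hm : m ≠ 0) (hn : 4 * m - 3 ≠ 0) :
    4 / (4 * m - 3) = 1 / m + 3 / (m * (4 * m - 3)) := by
  field_simp
  ring

theorem three_div_mul_three_mul_add_two {b : K} (hb₁ : b + 1 ≠ 0) (hb₂ : 3 * b + 2 ≠ 0) (c : K) :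
    3 / (c * (3 * b + 2)) = 1 / ((3 * b + 2) * (b + 1) * c) + 1 / ((b + 1) * c) := by
  rcases eq_or_ne c 0 with rfl | hc
  · simp
  · field_simp
    ring

end

theorem stmt_8_general (l b f : ℕ)
    (hf : (6 * l + 1) * (24 * l + 1) = f * (3 * b + 2)) :
    (4 : ℚ) / (24 * l + 1) =
      1 / (6 * l + 1) + 1 / ((3 * b + 2) * (b + 1) * f) + 1 / ((b + 1) * f) ∧
    ∃ x y z : ℕ, 0 < x ∧ 0 < y ∧ 0 < z ∧
      (4 : ℚ) / (24 * l + 1) = 1 / x + 1 / y + 1 / z := by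
  have hf_pos : 0 < f := Nat.pos_of_ne_zero (by rintro rfl; simp at hf)
  have hfq : (6 * l + 1 : ℚ) * (24 * l + 1) = f * (3 * b + 2) := by exact_mod_cast hf
  have key : (4 : ℚ) / (24 * l + 1) =
      1 / (6 * l + 1) + 1 / ((3 * b + 2) * (b + 1) * f) + 1 / ((b + 1) * f) := by
    calc (4 : ℚ) / (24 * l + 1)
        = 1 / (6 * l + 1) + 3 / ((6 * l + 1) * (24 * l + 1)) := by
          rw [show (24 * l + 1 : ℚ) = 4 * (6 * l + 1) - 3 by ring]
          exact four_div_four_mul_sub_three (by positivity) (by ring_nf; positivity)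
      _ = 1 / (6 * l + 1) + 3 / (f * (3 * b + 2)) := by rw [hfq]
      _ = _ := by
          rw [three_div_mul_three_mul_add_two (by positivity) (by positivity), add_assoc]
  refine ⟨key, 6 * l + 1, (3 * b + 2) * (b + 1) * f, (b + 1) * f,
    by positivity, by positivity, by positivity, ?_⟩
  push_cast
  exact key

theorem stmt_8 (l b f : ℕ) (hl : 1 ≤ l) (hb : 1 ≤ b)
    (hf : (6 * l + 1) * (24 * l + 1) = f * (3 * b + 2)) :
    (4 : ℚ) / (24 * l + 1) =
      1 / (6 * l + 1) + 1 / ((3 * b + 2) * (b + 1) * f) + 1 / ((b + 1) * f) ∧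
    ∃ x y z : ℕ, 0 < x ∧ 0 < y ∧ 0 < z ∧
      (4 : ℚ) / (24 * l + 1) = 1 / x + 1 / y + 1 / z :=
  stmt_8_general l b f hf
end

section
/- For every positive integer b, 4/(56b-7) = 1/(14b) + 1/(4b(56b-7)) + 1/(4b(56b-7)); hence the Erdős–Straus equation has a solution for all n ≡ 49 (mod 56). -/
/-
With n = 56b - 7 we have n + 7 = 4 · 14b, so
4/n - 1/(14b) = 4/n - 4/(n + 7) = 28/(n(n + 7)) = 2/(4bn).
Every n ≡ 49 (mod 56) is of this form with b = ⌊n/56⌋ + 1.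
-/

theorem four_div_fifty_six_mul_sub_seven {K : Type*} [Field K] [CharZero K] {b : K} (hb : b ≠ 0)
    (hn : 56 * b - 7 ≠ 0) :
    4 / (56 * b - 7) = 1 / (14 * b) + 1 / (4 * b * (56 * b - 7)) + 1 / (4 * b * (56 * b - 7)) := by
  field_simp
  ring

theorem four_div_fifty_six_mul_sub_seven_of_one_le (b : ℕ) (hb : 1 ≤ b) :
    (4 : ℚ) / (56 * b - 7) =
      1 / (14 * b) + 1 / (4 * b * (56 * b - 7)) + 1 / (4 * b * (56 * b - 7)) := by
  have hb' : (1 : ℚ) ≤ b := by exact_mod_cast hb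
  exact four_div_fifty_six_mul_sub_seven (by positivity) (by linarith)

theorem erdos_straus_of_mod_fifty_six_eq_forty_nine {n : ℕ} (hn : n % 56 = 49) :
    ∃ x y z : ℕ, 0 < x ∧ 0 < y ∧ 0 < z ∧ (4 : ℚ) / n = 1 / x + 1 / y + 1 / z := by
  set b := n / 56 + 1
  have hn_add : n + 7 = 56 * b := by omega
  have hn_cast : (n : ℚ) = 56 * b - 7 := by
    rw [eq_sub_iff_add_eq]
    exact_mod_cast hn_add
  have hn_pos : 0 < n := by omega
  refine ⟨14 * b, 4 * b * n, 4 * b * n, by positivity, by positivity, by positivity, ?_⟩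
  push_cast
  rw [hn_cast]
  exact four_div_fifty_six_mul_sub_seven_of_one_le b (by omega)

theorem stmt_10 (b : ℕ) (hb : 1 ≤ b) :
    (4 : ℚ) / (56 * b - 7) =
      1 / (14 * b) + 1 / (4 * b * (56 * b - 7)) + 1 / (4 * b * (56 * b - 7)) ∧
    ∀ n : ℕ, 0 < n → n % 56 = 49 →
      ∃ x y z : ℕ, 0 < x ∧ 0 < y ∧ 0 < z ∧
        (4 : ℚ) / n = 1 / x + 1 / y + 1 / z :=
  ⟨four_div_fifty_six_mul_sub_seven_of_one_le b hb,
    fun _ _ hn => erdos_straus_of_mod_fifty_six_eq_forty_nine hn⟩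
end

section
/- For every positive integer b, 4/(56b+33) = 1/(2(7b+5)) + 1/((b+1)(7b+5)(56b+33)) + 1/(2(b+1)(56b+33)); hence the Erdős–Straus equation has a solution for all n ≡ 33 (mod 56) with n ≥ 89. -/
theorem four_div_fiftySix_mul_add_thirtyThree {K : Type*} [Field K] [LinearOrder K]
    [IsStrictOrderedRing K] (b : K) (hb : 0 ≤ b) :
    4 / (56 * b + 33) =
      1 / (2 * (7 * b + 5)) + 1 / ((b + 1) * (7 * b + 5) * (56 * b + 33))
        + 1 / (2 * (b + 1) * (56 * b + 33)) := by
  have h₁ : 56 * b + 33 ≠ 0 := by positivity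
  have h₂ : 7 * b + 5 ≠ 0 := by positivity
  have h₃ : b + 1 ≠ 0 := by positivity
  field_simp
  ring

theorem erdosStraus_of_mod_fiftySix_eq_thirtyThree {n : ℕ} (hn : n % 56 = 33) :
    ∃ x y z : ℕ, 0 < x ∧ 0 < y ∧ 0 < z ∧ (4 : ℚ) / n = 1 / x + 1 / y + 1 / z := by
  obtain ⟨b, rfl⟩ : ∃ b, n = 56 * b + 33 := ⟨n / 56, by omega⟩
  refine ⟨2 * (7 * b + 5), (b + 1) * (7 * b + 5) * (56 * b + 33),
    2 * (b + 1) * (56 * b + 33), by positivity, by positivity, by positivity, ?_⟩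
  push_cast
  exact four_div_fiftySix_mul_add_thirtyThree (b : ℚ) b.cast_nonneg

theorem stmt_11_general (b : ℕ) :
    (4 : ℚ) / (56 * b + 33) =
      1 / (2 * (7 * b + 5)) + 1 / ((b + 1) * (7 * b + 5) * (56 * b + 33))
        + 1 / (2 * (b + 1) * (56 * b + 33)) ∧
    ∀ n : ℕ, 89 ≤ n → n % 56 = 33 →
      ∃ x y z : ℕ, 0 < x ∧ 0 < y ∧ 0 < z ∧
        (4 : ℚ) / n = 1 / x + 1 / y + 1 / z :=
  ⟨four_div_fiftySix_mul_add_thirtyThree (b : ℚ) b.cast_nonneg,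
    fun _ _ hn => erdosStraus_of_mod_fiftySix_eq_thirtyThree hn⟩

theorem stmt_11 (b : ℕ) (hb : 1 ≤ b) :
    (4 : ℚ) / (56 * b + 33) =
      1 / (2 * (7 * b + 5)) + 1 / ((b + 1) * (7 * b + 5) * (56 * b + 33))
        + 1 / (2 * (b + 1) * (56 * b + 33)) ∧
    ∀ n : ℕ, 89 ≤ n → n % 56 = 33 →
      ∃ x y z : ℕ, 0 < x ∧ 0 < y ∧ 0 < z ∧
        (4 : ℚ) / n = 1 / x + 1 / y + 1 / z :=
  stmt_11_general b
end

section
/- For every positive integer b, 4/(120b-47) = 1/(30b-10) + 1/(5(120b-47)(3b-1)) + 1/(2(120b-47)(3b-1)); hence the Erdős–Straus equation has a solution for all n ≡ 73 (mod 120). -/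
/-- When `n + 7 = 40 t`, the last two unit fractions add up to `7 / (10 n t)`, and
`1 / (10 t) + 7 / (10 n t) = (n + 7) / (10 n t) = 4 / n`. -/
theorem four_div_eq_one_div_add_one_div_add_one_div_s15 {K : Type*} [Field K] [CharZero K]
    {n t : K} (hn : n ≠ 0) (ht : t ≠ 0) (h : n + 7 = 40 * t) :
    4 / n = 1 / (10 * t) + 1 / (5 * n * t) + 1 / (2 * n * t) := by
  field_simp
  linear_combination (-10 : K) * h

theorem exists_erdos_straus_of_mod_120_eq_73 {n : ℕ} (hn : n % 120 = 73) :
    ∃ x y z : ℕ, 0 < x ∧ 0 < y ∧ 0 < z ∧ (4 : ℚ) / n = 1 / x + 1 / y + 1 / z := by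
  have hn_pos : 0 < n := by omega
  set t := 3 * (n / 120) + 2
  have h_seven : n + 7 = 40 * t := by omega
  refine ⟨10 * t, 5 * n * t, 2 * n * t, by positivity, by positivity, by positivity, ?_⟩
  push_cast
  exact four_div_eq_one_div_add_one_div_add_one_div_s15 (by positivity) (by positivity)
    (by exact_mod_cast h_seven)

theorem stmt_15_general (b : ℕ) :
    (4 : ℚ) / (120 * b - 47) =
      1 / (30 * b - 10) + 1 / (5 * (120 * b - 47) * (3 * b - 1))
        + 1 / (2 * (120 * b - 47) * (3 * b - 1)) ∧
    ∀ n : ℕ, 0 < n → n % 120 = 73 →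
      ∃ x y z : ℕ, 0 < x ∧ 0 < y ∧ 0 < z ∧
        (4 : ℚ) / n = 1 / x + 1 / y + 1 / z := by
  refine ⟨?_, fun n _ hn => exists_erdos_straus_of_mod_120_eq_73 hn⟩
  have h_ne : (120 * b : ℚ) - 47 ≠ 0 := by
    rw [sub_ne_zero]; exact_mod_cast (by omega : 120 * b ≠ 47)
  have ht_ne : (3 * b : ℚ) - 1 ≠ 0 := by
    rw [sub_ne_zero]; exact_mod_cast (by omega : 3 * b ≠ 1)
  rw [show (30 * b : ℚ) - 10 = 10 * (3 * b - 1) by ring]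
  exact four_div_eq_one_div_add_one_div_add_one_div_s15 h_ne ht_ne (by ring)

theorem stmt_15 (b : ℕ) (hb : 1 ≤ b) :
    (4 : ℚ) / (120 * b - 47) =
      1 / (30 * b - 10) + 1 / (5 * (120 * b - 47) * (3 * b - 1))
        + 1 / (2 * (120 * b - 47) * (3 * b - 1)) ∧
    ∀ n : ℕ, 0 < n → n % 120 = 73 →
      ∃ x y z : ℕ, 0 < x ∧ 0 < y ∧ 0 < z ∧
        (4 : ℚ) / n = 1 / x + 1 / y + 1 / z :=
  stmt_15_general b
end

section
/- For every positive integer b, 4/(120b-23) = 1/(30b-5) + 1/(10(120b-23)(6b-1)) + 1/(2(120b-23)(6b-1)); hence the Erdős–Straus equation has a solution for all n ≡ 97 (mod 120). -/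
/-! After clearing denominators the identity is a polynomial identity in `b`, and its
denominators (`30b - 5 = 5(6b - 1)` among them) vanish at no natural `b`. Every
`n ≡ 97 (mod 120)` is `120b - 23` with `b = n / 120 + 1`, so the identity solves it. -/

theorem four_div_eq_erdosStraus {K : Type*} [Field K] [CharZero K] (t : K)
    (h₁ : 120 * t - 23 ≠ 0) (h₂ : 6 * t - 1 ≠ 0) :
    4 / (120 * t - 23) =
      1 / (30 * t - 5) + 1 / (10 * (120 * t - 23) * (6 * t - 1))
        + 1 / (2 * (120 * t - 23) * (6 * t - 1)) := by
  have h₃ : 30 * t - 5 ≠ 0 := by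
    rw [show 30 * t - 5 = 5 * (6 * t - 1) by ring]
    exact mul_ne_zero (by norm_num) h₂
  rw [div_add_div _ _ h₃ (by simp [*]), div_add_div _ _ (by simp [*]) (by simp [*]),
    div_eq_div_iff h₁ (by simp [*])]
  ring

theorem four_div_eq_erdosStraus_natCast (b : ℕ) :
    (4 : ℚ) / (120 * b - 23) =
      1 / (30 * b - 5) + 1 / (10 * (120 * b - 23) * (6 * b - 1))
        + 1 / (2 * (120 * b - 23) * (6 * b - 1)) := by
  refine four_div_eq_erdosStraus _ (fun h => ?_) (fun h => ?_)
  · have h' : ((120 * b : ℕ) : ℚ) = 23 := by push_cast; linarith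
    norm_cast at h'
    omega
  · have h' : ((6 * b : ℕ) : ℚ) = 1 := by push_cast; linarith
    norm_cast at h'
    omega

theorem exists_four_div_eq_of_mod_120_eq_97 {n : ℕ} (hn : n % 120 = 97) :
    ∃ x y z : ℕ, 0 < x ∧ 0 < y ∧ 0 < z ∧ (4 : ℚ) / n = 1 / x + 1 / y + 1 / z := by
  obtain ⟨k, rfl⟩ : ∃ k, n = 120 * k + 97 := ⟨n / 120, by omega⟩
  refine ⟨30 * k + 25, 10 * (120 * k + 97) * (6 * k + 5), 2 * (120 * k + 97) * (6 * k + 5),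
    by omega, by positivity, by positivity, ?_⟩
  convert four_div_eq_erdosStraus_natCast (k + 1) using 3 <;> push_cast <;> ring

theorem stmt_16_general (b : ℕ) :
    (4 : ℚ) / (120 * b - 23) =
      1 / (30 * b - 5) + 1 / (10 * (120 * b - 23) * (6 * b - 1))
        + 1 / (2 * (120 * b - 23) * (6 * b - 1)) ∧
    ∀ n : ℕ, 0 < n → n % 120 = 97 →
      ∃ x y z : ℕ, 0 < x ∧ 0 < y ∧ 0 < z ∧
        (4 : ℚ) / n = 1 / x + 1 / y + 1 / z :=
  ⟨four_div_eq_erdosStraus_natCast b, fun _ _ hn => exists_four_div_eq_of_mod_120_eq_97 hn⟩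

theorem stmt_16 (b : ℕ) (hb : 1 ≤ b) :
    (4 : ℚ) / (120 * b - 23) =
      1 / (30 * b - 5) + 1 / (10 * (120 * b - 23) * (6 * b - 1))
        + 1 / (2 * (120 * b - 23) * (6 * b - 1)) ∧
    ∀ n : ℕ, 0 < n → n % 120 = 97 →
      ∃ x y z : ℕ, 0 < x ∧ 0 < y ∧ 0 < z ∧
        (4 : ℚ) / n = 1 / x + 1 / y + 1 / z :=
  stmt_16_general b
end

section
/- For every positive integer c, 4/(840c-599) = 1/(210c-147) + 1/(42(10c-7)(840c-599)) + 1/(2(10c-7)(840c-599)); hence the Erdős–Straus equation has a solution for all n ≡ 241 (mod 840). -/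
/-!
With `n = 840c - 599` and `x = 210c - 147 = 21(10c - 7)` one has `4x - n = 11`, so
`4/n - 1/x = 11/(21(10c - 7)n)`, and the splitting `11/21 = 1/42 + 1/2` gives the other two
unit fractions. Every `n ≡ 241 (mod 840)` is `840c - 599` with `c = n / 840 + 1`.
-/

lemma natCast_mul_sub_natCast_ne_zero {K : Type*} [Field K] [CharZero K] {a b : ℕ}
    (h : ¬ a ∣ b) (c : ℕ) : (a * c - b : K) ≠ 0 := by
  rw [sub_ne_zero]
  exact_mod_cast fun hab : a * c = b => h ⟨c, hab.symm⟩

lemma four_div_840_mul_sub_599_eq {K : Type*} [Field K] [CharZero K] {t : K}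
    (ht : 10 * t - 7 ≠ 0) (hn : 840 * t - 599 ≠ 0) :
    4 / (840 * t - 599) =
      1 / (210 * t - 147) + 1 / (42 * (10 * t - 7) * (840 * t - 599))
        + 1 / (2 * (10 * t - 7) * (840 * t - 599)) := by
  rw [show 210 * t - 147 = 21 * (10 * t - 7) by ring,
    show 840 * t - 599 = 84 * (10 * t - 7) - 11 by ring] at *
  generalize 10 * t - 7 = d at *
  field_simp
  ring

theorem stmt_17_general (c : ℕ) :
    (4 : ℚ) / (840 * c - 599) =
      1 / (210 * c - 147) + 1 / (42 * (10 * c - 7) * (840 * c - 599))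
        + 1 / (2 * (10 * c - 7) * (840 * c - 599)) ∧
    ∀ n : ℕ, 0 < n → n % 840 = 241 →
      ∃ x y z : ℕ, 0 < x ∧ 0 < y ∧ 0 < z ∧
        (4 : ℚ) / n = 1 / x + 1 / y + 1 / z := by
  have identity (c : ℕ) := four_div_840_mul_sub_599_eq (K := ℚ) (t := c)
    (natCast_mul_sub_natCast_ne_zero (by decide) c)
    (natCast_mul_sub_natCast_ne_zero (by decide) c)
  refine ⟨identity c, fun n _ hmod => ?_⟩
  obtain ⟨k, rfl⟩ : ∃ k, n = 840 * k + 241 := ⟨n / 840, by omega⟩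
  refine ⟨210 * k + 63, 42 * (10 * k + 3) * (840 * k + 241),
    2 * (10 * k + 3) * (840 * k + 241), by positivity, by positivity, by positivity, ?_⟩
  convert identity (k + 1) using 2 <;> push_cast <;> ring

theorem stmt_17 (c : ℕ) (hc : 1 ≤ c) :
    (4 : ℚ) / (840 * c - 599) =
      1 / (210 * c - 147) + 1 / (42 * (10 * c - 7) * (840 * c - 599))
        + 1 / (2 * (10 * c - 7) * (840 * c - 599)) ∧
    ∀ n : ℕ, 0 < n → n % 840 = 241 →
      ∃ x y z : ℕ, 0 < x ∧ 0 < y ∧ 0 < z ∧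
        (4 : ℚ) / n = 1 / x + 1 / y + 1 / z :=
  stmt_17_general c
end

section
/- Let p be an odd prime and let u₅, v₄, w₂, w₃, w₄ be positive integers satisfying u₅·v₄ = w₃·w₂, u₅ + v₄ = w₄·w₂, and p = 4w₃ - w₄ > 0. Then 4/p = 1/(u₅·p) + 1/(v₄·p) + 1/w₃, i.e., x = u₅p, y = v₄p, z = w₃ solve the Erdős–Straus equation for n = p. -/
theorem erdosStraus_identity {K : Type*} [Field K] {p u v w₂ w₃ w₄ : K}
    (hp : p ≠ 0) (hu : u ≠ 0) (hv : v ≠ 0) (hw₃ : w₃ ≠ 0)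
    (h1 : u * v = w₃ * w₂) (h2 : u + v = w₄ * w₂) (h4 : p = 4 * w₃ - w₄) :
    4 / p = 1 / (u * p) + 1 / (v * p) + 1 / w₃ := by
  field_simp
  linear_combination w₄ * h1 - w₃ * h2 - u * v * h4

theorem stmt_18_general (p u₅ v₄ w₂ w₃ w₄ : ℕ)
    (hu : 0 < u₅) (hv : 0 < v₄)
    (h1 : u₅ * v₄ = w₃ * w₂) (h2 : u₅ + v₄ = w₄ * w₂)
    (h3 : w₄ < 4 * w₃) (h4 : p = 4 * w₃ - w₄) :
    (4 : ℚ) / p = 1 / (u₅ * p) + 1 / (v₄ * p) + 1 / w₃ := by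
  have hp : p ≠ 0 := by omega
  have hw₃ : w₃ ≠ 0 := by omega
  refine erdosStraus_identity (w₂ := (w₂ : ℚ)) (w₄ := (w₄ : ℚ)) (by exact_mod_cast hp)
    (by exact_mod_cast hu.ne') (by exact_mod_cast hv.ne') (by exact_mod_cast hw₃)
    (by exact_mod_cast h1) (by exact_mod_cast h2) ?_
  rw [h4, Nat.cast_sub h3.le]
  push_cast
  ring

theorem stmt_18 (p u₅ v₄ w₂ w₃ w₄ : ℕ)
    (hp : p.Prime) (hodd : Odd p)
    (hu : 0 < u₅) (hv : 0 < v₄) (hw₂ : 0 < w₂) (hw₃ : 0 < w₃) (hw₄ : 0 < w₄)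
    (h1 : u₅ * v₄ = w₃ * w₂) (h2 : u₅ + v₄ = w₄ * w₂)
    (h3 : w₄ < 4 * w₃) (h4 : p = 4 * w₃ - w₄) :
    (4 : ℚ) / p = 1 / (u₅ * p) + 1 / (v₄ * p) + 1 / w₃ :=
  stmt_18_general p u₅ v₄ w₂ w₃ w₄ hu hv h1 h2 h3 h4
end
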